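/- Switching identity: let G be a k-uniform hypergraph, e_1 = {u_1,...,u_k}, e_2 = {v_1,...,v_k} edges with all 2k vertices distinct, 1 ≤ l ≤ k-1, and let G' be obtained by replacing e_1, e_2 with e_1' = {v_1,...,v_l, u_{l+1},...,u_k} and e_2' = {u_1,...,u_l, v_{l+1},...,v_k}. Then for every real function f on V, ⟨L_{G'} f, f⟩ - ⟨L_G f, f⟩ = (2/(k-1)) · (Σ_{i=1}^l f(v_i) - Σ_{i=1}^l f(u_i)) · (Σ_{j=l+1}^k f(v_j) - Σ_{j=l+1}^k f(u_j)). -/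

import Mathlib

open Finset

variable {V : Type*} [Fintype V] [DecidableEq V]

/-- The degree of a vertex: the number of edges containing it. -/
def deg (E : Finset (Finset V)) (v : V) : ℕ := (E.filter (fun e => v ∈ e)).card

/-- The adjacency matrix of a hypergraph. -/
noncomputable def adjMat (E : Finset (Finset V)) (i j : V) : ℝ :=
  if i ≠ j then ∑ e ∈ E.filter (fun e => i ∈ e ∧ j ∈ e), (1 : ℝ) / ((e.card : ℝ) - 1) else 0

/-- The Laplacian L = D - A applied to a function. -/
noncomputable def lap (E : Finset (Finset V)) (f : V → ℝ) (i : V) : ℝ :=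
  (deg E i : ℝ) * f i - ∑ j, adjMat E i j * f j

/-- The Laplacian quadratic form ⟨Lf, f⟩. -/
noncomputable def lapForm (E : Finset (Finset V)) (f : V → ℝ) : ℝ :=
  ∑ i, lap E f i * f i

/-- Two vertices are adjacent if they are distinct and share an edge. -/
def HAdj (E : Finset (Finset V)) (u v : V) : Prop :=
  u ≠ v ∧ ∃ e ∈ E, u ∈ e ∧ v ∈ e

/-- A hypergraph is connected if any two vertices are joined by a path. -/
def HyperConnected (E : Finset (Finset V)) : Prop :=
  ∀ u v : V, Relation.ReflTransGen (HAdj E) u v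

/-- A cycle: distinct vertices u_1,…,u_p and distinct edges e_1,…,e_p (p ≥ 2)
with u_i, u_{i+1} ∈ e_i cyclically. -/
def HasCycle (E : Finset (Finset V)) : Prop :=
  ∃ (p : ℕ) (hp : 2 ≤ p) (u : Fin p → V) (e : Fin p → Finset V),
    Function.Injective u ∧ Function.Injective e ∧
    (∀ i, e i ∈ E) ∧ (∀ i : Fin p, u i ∈ e i ∧ u (i + ⟨1, by omega⟩) ∈ e i)

/-- A k-uniform supertree: connected, acyclic, every edge of size k. -/
def IsSupertree (k : ℕ) (E : Finset (Finset V)) : Prop :=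
  (∀ e ∈ E, e.card = k) ∧ HyperConnected E ∧ ¬ HasCycle E

/-- The Rayleigh quotient. -/
noncomputable def rayleigh (E : Finset (Finset V)) (f : V → ℝ) : ℝ :=
  lapForm E f / ∑ v, (f v) ^ 2

/-- f vanishes on the boundary (the degree-one vertices). -/
def Vanishes (E : Finset (Finset V)) (f : V → ℝ) : Prop :=
  ∀ v, deg E v = 1 → f v = 0

/-- The first Dirichlet eigenvalue: infimum of Rayleigh quotients of nonzero
functions vanishing on the boundary. -/
noncomputable def firstEig (E : Finset (Finset V)) : ℝ :=
  sInf {r : ℝ | ∃ f : V → ℝ, f ≠ 0 ∧ Vanishes E f ∧ r = rayleigh E f}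

/-- The first Dirichlet eigenfunction: normalized, vanishing on the boundary,
positive on interior vertices, and an eigenfunction of the first eigenvalue. -/
noncomputable def IsFirstEigfun (E : Finset (Finset V)) (f : V → ℝ) : Prop :=
  (∑ v, (f v) ^ 2) = 1 ∧ Vanishes E f ∧ (∀ v, deg E v ≠ 1 → 0 < f v) ∧
  (∀ v, deg E v ≠ 1 → lap E f v = firstEig E * f v)

/-- The underlying simple graph of a hypergraph. -/
def toGraph (E : Finset (Finset V)) : SimpleGraph V where
  Adj u v := u ≠ v ∧ ∃ e ∈ E, u ∈ e ∧ v ∈ e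
  symm := by
    constructor
    rintro u v ⟨h, e, he, hu, hv⟩
    exact ⟨h.symm, e, he, hv, hu⟩
  loopless := by constructor; rintro u ⟨h, -⟩; exact h rfl

/-- The height of a vertex: distance to the root v0. -/
noncomputable def height (E : Finset (Finset V)) (v0 v : V) : ℕ := (toGraph E).dist v0 v

/-- Two hypergraphs have the same degree sequence. -/
def SameDegSeq (E E' : Finset (Finset V)) : Prop :=
  Multiset.map (deg E) Finset.univ.val = Multiset.map (deg E') Finset.univ.val

/-- The Faber–Krahn property: minimal first Dirichlet eigenvalue among all
k-uniform supertrees with the same degree sequence. -/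
noncomputable def FKProperty (k : ℕ) (E : Finset (Finset V)) : Prop :=
  IsSupertree k E ∧
  ∀ E' : Finset (Finset V), IsSupertree k E' → SameDegSeq E E' → firstEig E ≤ firstEig E'

/-- A spiral-like ordering (SLO-ordering) with root v0, encoded by an injective
rank function r; conditions (S1)–(S5). -/
def IsSLO (E : Finset (Finset V)) (v0 : V) (r : V → ℕ) : Prop :=
  Function.Injective r ∧ (∀ v, r v0 ≤ r v) ∧
  -- (S1)
  (∀ u v, r u < r v → height E v0 u ≤ height E v0 v) ∧
  -- (S2)
  (∀ u v u1 v1 : V, (toGraph E).Adj u u1 → height E v0 u1 = height E v0 u + 1 →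
     (toGraph E).Adj v v1 → height E v0 v1 = height E v0 v + 1 →
     r u < r v → r u1 < r v1) ∧
  -- (S3)
  (∀ u v, r u < r v → deg E u = 1 → deg E v = 1) ∧
  -- (S4): no vertex outside an edge lies between two non-minimal vertices of the edge
  (∀ e ∈ E, ∀ x ∈ e, ∀ y ∈ e, ∀ z : V, z ∉ e → r x < r z → r z < r y → ∀ w ∈ e, r x ≤ r w) ∧
  -- (S5)
  (∀ u v, deg E u ≠ 1 → deg E v ≠ 1 → r u < r v → deg E u ≤ deg E v)

/-- A supertree admitting an SLO-ordering. -/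
def HasSLO (E : Finset (Finset V)) : Prop := ∃ (v0 : V) (r : V → ℕ), IsSLO E v0 r

/-- Isomorphism of hypergraphs on the same vertex set. -/
def IsoHyper (E E' : Finset (Finset V)) : Prop :=
  ∃ σ : V ≃ V, E' = E.image (fun e => e.image σ)

/-!
The quadratic form splits over the edges, and the contribution of an edge `e` is
`Σ f² - ((Σ f)² - Σ f²) / (|e| - 1)`, which depends only on `|e|` and the sums of `f` and `f²`
over `e`. Switching preserves the edge sizes and the total of `Σ f²`, so only the squared edge
sums change: with `a, b` the sums over the two parts of `e₁` and `c, d` those of `e₂`,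
`(c + b)² + (a + d)² - (a + b)² - (c + d)² = -2 (c - a) (d - b)`.
-/

noncomputable def edgeForm {α : Type*} (f : α → ℝ) (e : Finset α) : ℝ :=
  ∑ i ∈ e, f i ^ 2 - ((∑ i ∈ e, f i) ^ 2 - ∑ i ∈ e, f i ^ 2) / (#e - 1)

noncomputable def edgeLap {α : Type*} [DecidableEq α] (e : Finset α) (f : α → ℝ) (i : α) : ℝ :=
  if i ∈ e then f i - (∑ j ∈ e.erase i, f j) / (#e - 1) else 0

theorem sum_edgeLap_mul_self {α : Type*} [Fintype α] [DecidableEq α] (e : Finset α)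
    (f : α → ℝ) : ∑ i, edgeLap e f i * f i = edgeForm f e := by
  set S := ∑ j ∈ e, f j
  have hvertex : ∀ i ∈ e, edgeLap e f i * f i = f i ^ 2 - (S * f i - f i ^ 2) / (#e - 1) := by
    intro i hi
    rw [edgeLap, if_pos hi, sum_erase_eq_sub hi]
    ring
  rw [← sum_subset (subset_univ e) fun i _ hi => by rw [edgeLap, if_neg hi, zero_mul],
    sum_congr rfl hvertex, sum_sub_distrib, ← sum_div, sum_sub_distrib, ← mul_sum, ← sq]
  rfl

theorem adjMat_mul_eq_sum {α : Type*} [DecidableEq α] (E : Finset (Finset α)) (f : α → ℝ)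
    (i j : α) :
    adjMat E i j * f j = ∑ e ∈ E, if i ∈ e ∧ j ∈ e.erase i then f j / (#e - 1) else 0 := by
  by_cases hij : i = j
  · subst hij
    simp [adjMat]
  · rw [adjMat, if_pos hij, sum_filter, sum_mul]
    refine sum_congr rfl fun e _ => ?_
    simp only [mem_erase, Ne.symm hij, ne_eq, not_false_eq_true, true_and]
    split_ifs <;> ring

theorem sum_adjMat_mul (E : Finset (Finset V)) (f : V → ℝ) (i : V) :
    ∑ j, adjMat E i j * f j =
      ∑ e ∈ E, if i ∈ e then (∑ j ∈ e.erase i, f j) / (#e - 1) else 0 := by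
  simp only [adjMat_mul_eq_sum]
  rw [sum_comm]
  refine sum_congr rfl fun e _ => ?_
  by_cases hi : i ∈ e
  · simp only [hi, true_and, if_true, sum_ite_mem_eq, sum_div]
  · simp only [hi, false_and, if_false, sum_const_zero]

theorem lap_eq_sum_edgeLap (E : Finset (Finset V)) (f : V → ℝ) (i : V) :
    lap E f i = ∑ e ∈ E, edgeLap e f i := by
  rw [lap, deg, natCast_card_filter, sum_adjMat_mul, sum_mul, ← sum_sub_distrib]
  refine sum_congr rfl fun e _ => ?_
  rw [edgeLap]
  split_ifs <;> ring

theorem lapForm_eq_sum_edgeForm (E : Finset (Finset V)) (f : V → ℝ) :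
    lapForm E f = ∑ e ∈ E, edgeForm f e := by
  simp only [lapForm, lap_eq_sum_edgeLap, sum_mul]
  rw [sum_comm]
  exact sum_congr rfl fun e _ => sum_edgeLap_mul_self e f

theorem lapForm_replace_pair {E : Finset (Finset V)} {e₁ e₂ e₁' e₂' : Finset V}
    (he₁ : e₁ ∈ E) (he₂ : e₂ ∈ E) (h₁₂ : e₁ ≠ e₂) (he₁' : e₁' ∉ E) (he₂' : e₂' ∉ E)
    (h₁₂' : e₁' ≠ e₂') (f : V → ℝ) :
    lapForm ((E \ {e₁, e₂}) ∪ {e₁', e₂'}) f - lapForm E f =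
      edgeForm f e₁' + edgeForm f e₂' - (edgeForm f e₁ + edgeForm f e₂) := by
  have hsub : {e₁, e₂} ⊆ E := insert_subset he₁ (singleton_subset_iff.2 he₂)
  have hdisj : Disjoint (E \ {e₁, e₂}) {e₁', e₂'} :=
    disjoint_insert_right.2 ⟨fun h => he₁' (mem_sdiff.1 h).1,
      disjoint_singleton_right.2 fun h => he₂' (mem_sdiff.1 h).1⟩
  rw [lapForm_eq_sum_edgeForm, lapForm_eq_sum_edgeForm, sum_union hdisj, ← sum_sdiff hsub,
    sum_pair h₁₂, sum_pair h₁₂']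
  ring

theorem edgeForm_swap {α : Type*} [DecidableEq α] {A B C D : Finset α}
    (hAB : Disjoint A B) (hAD : Disjoint A D) (hCB : Disjoint C B) (hCD : Disjoint C D)
    (hAC : #A = #C) (hBD : #B = #D) (f : α → ℝ) :
    edgeForm f (C ∪ B) + edgeForm f (A ∪ D) - (edgeForm f (A ∪ B) + edgeForm f (C ∪ D)) =
      2 / (((#A + #B : ℕ) : ℝ) - 1) * (∑ i ∈ C, f i - ∑ i ∈ A, f i) *
        (∑ i ∈ D, f i - ∑ i ∈ B, f i) := by
  simp only [edgeForm, card_union_of_disjoint, sum_union, hAB, hAD, hCB, hCD, hAC, hBD]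
  ring

theorem union_ne_of_disjoint {α : Type*} [DecidableEq α] {s t r : Finset α} (hs : s.Nonempty)
    (h : Disjoint s t) : s ∪ r ≠ t := by
  rintro rfl
  exact hs.ne_empty (disjoint_self_iff_empty _ |>.1 (h.mono_right subset_union_left))

theorem disjoint_image_image_of_ne {α ι : Type*} [DecidableEq α] {u v : ι → α}
    (huv : ∀ i j, u i ≠ v j) (s t : Finset ι) : Disjoint (s.image u) (t.image v) := by
  simp only [disjoint_left, mem_image]
  rintro _ ⟨i, -, rfl⟩ ⟨j, -, hj⟩
  exact huv i j hj.symm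

theorem lapForm_switch {ι : Type*} [Fintype ι] [DecidableEq ι] {E : Finset (Finset V)}
    {u v : ι → V} (hu : Function.Injective u) (hv : Function.Injective v)
    (huv : ∀ i j, u i ≠ v j) {s : Finset ι} (hs : s.Nonempty)
    (he₁ : univ.image u ∈ E) (he₂ : univ.image v ∈ E)
    (he₁' : s.image v ∪ sᶜ.image u ∉ E) (he₂' : s.image u ∪ sᶜ.image v ∉ E) (f : V → ℝ) :
    lapForm ((E \ {univ.image u, univ.image v}) ∪
        {s.image v ∪ sᶜ.image u, s.image u ∪ sᶜ.image v}) f - lapForm E f =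
      2 / ((Fintype.card ι : ℝ) - 1) * (∑ i ∈ s, f (v i) - ∑ i ∈ s, f (u i)) *
        (∑ i ∈ sᶜ, f (v i) - ∑ i ∈ sᶜ, f (u i)) := by
  have hsplit (w : ι → V) : univ.image w = s.image w ∪ sᶜ.image w := by
    rw [← image_union, union_compl]
  have hu' := (disjoint_image hu).2 (disjoint_compl_right (a := s))
  have hv' := (disjoint_image hv).2 (disjoint_compl_right (a := s))
  have huv' := disjoint_image_image_of_ne huv
  have hcard (t : Finset ι) : #(t.image u) = #(t.image v) := by
    rw [card_image_of_injective _ hu, card_image_of_injective _ hv]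
  rw [hsplit u] at he₁ ⊢
  rw [hsplit v] at he₂ ⊢
  rw [lapForm_replace_pair he₁ he₂
      (union_ne_of_disjoint (hs.image u) (disjoint_union_right.2 ⟨huv' s s, huv' s sᶜ⟩))
      he₁' he₂'
      (union_ne_of_disjoint (hs.image v) (disjoint_union_right.2 ⟨(huv' s s).symm, hv'⟩)),
    edgeForm_swap hu' (huv' s sᶜ) (huv' sᶜ s).symm hv' (hcard s) (hcard sᶜ),
    card_image_of_injective _ hu, card_image_of_injective _ hu, card_add_card_compl,
    sum_image hu.injOn, sum_image hu.injOn, sum_image hv.injOn, sum_image hv.injOn]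

theorem switching_identity_general (k l : ℕ) (hk : 2 ≤ k) (hl1 : 1 ≤ l)
    (E : Finset (Finset V))
    (u v : Fin k → V) (hui : Function.Injective u) (hvi : Function.Injective v)
    (huv : ∀ i j, u i ≠ v j)
    (he1 : Finset.image u Finset.univ ∈ E) (he2 : Finset.image v Finset.univ ∈ E)
    (hne1 : ((Finset.univ.filter (fun i : Fin k => (i : ℕ) < l)).image v ∪
              ((Finset.univ.filter (fun i : Fin k => (i : ℕ) < l))ᶜ).image u) ∉ E)
    (hne2 : ((Finset.univ.filter (fun i : Fin k => (i : ℕ) < l)).image u ∪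
              ((Finset.univ.filter (fun i : Fin k => (i : ℕ) < l))ᶜ).image v) ∉ E)
    (f : V → ℝ) :
    lapForm ((E \ {Finset.image u Finset.univ, Finset.image v Finset.univ}) ∪
        {(Finset.univ.filter (fun i : Fin k => (i : ℕ) < l)).image v ∪
            ((Finset.univ.filter (fun i : Fin k => (i : ℕ) < l))ᶜ).image u,
          (Finset.univ.filter (fun i : Fin k => (i : ℕ) < l)).image u ∪
            ((Finset.univ.filter (fun i : Fin k => (i : ℕ) < l))ᶜ).image v}) f
      - lapForm E f
      = (2 / ((k : ℝ) - 1)) *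
          ((∑ i ∈ Finset.univ.filter (fun i : Fin k => (i : ℕ) < l), f (v i)) -
            ∑ i ∈ Finset.univ.filter (fun i : Fin k => (i : ℕ) < l), f (u i)) *
          ((∑ i ∈ (Finset.univ.filter (fun i : Fin k => (i : ℕ) < l))ᶜ, f (v i)) -
            ∑ i ∈ (Finset.univ.filter (fun i : Fin k => (i : ℕ) < l))ᶜ, f (u i)) := by
  have hL : (univ.filter fun i : Fin k => (i : ℕ) < l).Nonempty :=
    ⟨⟨0, by omega⟩, mem_filter.2 ⟨mem_univ _, hl1⟩⟩
  have h := lapForm_switch hui hvi huv hL he1 he2 hne1 hne2 f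
  rwa [Fintype.card_fin] at h

/-- the switching identity. Exchanging {u_1,…,u_l} ⊆ e_1 with
{v_1,…,v_l} ⊆ e_2 changes the Laplacian quadratic form by
(2/(k-1))·(Σ_{i≤l} f(v_i) - Σ_{i≤l} f(u_i))·(Σ_{j>l} f(v_j) - Σ_{j>l} f(u_j)). -/
theorem switching_identity (k l : ℕ) (hk : 2 ≤ k) (hl1 : 1 ≤ l) (hl2 : l ≤ k - 1)
    (E : Finset (Finset V)) (hu : ∀ e ∈ E, e.card = k)
    (u v : Fin k → V) (hui : Function.Injective u) (hvi : Function.Injective v)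
    (huv : ∀ i j, u i ≠ v j)
    (he1 : Finset.image u Finset.univ ∈ E) (he2 : Finset.image v Finset.univ ∈ E)
    (hne1 : ((Finset.univ.filter (fun i : Fin k => (i : ℕ) < l)).image v ∪
              ((Finset.univ.filter (fun i : Fin k => (i : ℕ) < l))ᶜ).image u) ∉ E)
    (hne2 : ((Finset.univ.filter (fun i : Fin k => (i : ℕ) < l)).image u ∪
              ((Finset.univ.filter (fun i : Fin k => (i : ℕ) < l))ᶜ).image v) ∉ E)
    (f : V → ℝ) :
    lapForm ((E \ {Finset.image u Finset.univ, Finset.image v Finset.univ}) ∪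
        {(Finset.univ.filter (fun i : Fin k => (i : ℕ) < l)).image v ∪
            ((Finset.univ.filter (fun i : Fin k => (i : ℕ) < l))ᶜ).image u,
          (Finset.univ.filter (fun i : Fin k => (i : ℕ) < l)).image u ∪
            ((Finset.univ.filter (fun i : Fin k => (i : ℕ) < l))ᶜ).image v}) f
      - lapForm E f
      = (2 / ((k : ℝ) - 1)) *
          ((∑ i ∈ Finset.univ.filter (fun i : Fin k => (i : ℕ) < l), f (v i)) -
            ∑ i ∈ Finset.univ.filter (fun i : Fin k => (i : ℕ) < l), f (u i)) *
          ((∑ i ∈ (Finset.univ.filter (fun i : Fin k => (i : ℕ) < l))ᶜ, f (v i)) -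
            ∑ i ∈ (Finset.univ.filter (fun i : Fin k => (i : ℕ) < l))ᶜ, f (u i)) :=
  switching_identity_general k l hk hl1 E u v hui hvi huv he1 he2 hne1 hne2 f
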